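/- Monotonicity of the Turing region: let J(x) be a continuous family of real 2×2 matrices on [0,1] with tr(J(x)) < 0 and det(J(x)) > 0 everywhere, D = diag(1,d) with 0 < d < 1, B_λ(x) = D⁻¹(J(x) - λI), and define T_λ = {x ∈ [0,1] : tr(B_λ(x)) > 0 and tr(B_λ(x))² - 4 det(B_λ(x)) ≥ 0}. Then for 0 ≤ λ₁ ≤ λ₂, T_{λ₂} ⊆ T_{λ₁}. -/

import Mathlib

open Matrix

/-- The diffusion matrix D = diag(1, d). -/
noncomputable def Dmat (d : ℝ) : Matrix (Fin 2) (Fin 2) ℝ := !![1, 0; 0, d]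

/-- B_λ(x) = D⁻¹ (J(x) - λ I). -/
noncomputable def Bmat (J : Matrix (Fin 2) (Fin 2) ℝ) (d lam : ℝ) :
    Matrix (Fin 2) (Fin 2) ℝ := (Dmat d)⁻¹ * (J - lam • 1)

/-- The Turing region T_λ. -/
noncomputable def TuringRegion (J : ℝ → Matrix (Fin 2) (Fin 2) ℝ) (d lam : ℝ) :
    Set ℝ :=
  {x ∈ Set.Icc (0 : ℝ) 1 | 0 < (Bmat (J x) d lam).trace ∧
    0 ≤ (Bmat (J x) d lam).trace ^ 2 - 4 * (Bmat (J x) d lam).det}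

/-! As λ grows, tr B_λ decreases, while det B_λ increases once λ ≥ tr J / 2 (in particular for
all λ ≥ 0 when tr J < 0). Hence, where the trace stays positive, the discriminant
tr² - 4 det can only grow as λ decreases. -/

section

variable (M : Matrix (Fin 2) (Fin 2) ℝ) {d : ℝ}

lemma Dmat_inv (hd : d ≠ 0) : (Dmat d)⁻¹ = !![1, 0; 0, d⁻¹] := by
  apply Matrix.inv_eq_right_inv
  ext i j
  fin_cases i <;> fin_cases j <;> simp [Dmat, hd]

lemma trace_Bmat (hd : d ≠ 0) (lam : ℝ) :
    (Bmat M d lam).trace = (M 0 0 - lam) + (M 1 1 - lam) / d := by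
  simp [Bmat, Dmat_inv hd, Matrix.trace_fin_two, Matrix.vecMul, dotProduct, Fin.sum_univ_two]
  ring

lemma det_Bmat (lam : ℝ) : (Bmat M d lam).det = (M - lam • 1).det / d := by
  simp [Bmat, Dmat, Matrix.det_fin_two_of, div_eq_inv_mul]

lemma det_sub_smul_one_fin_two (lam : ℝ) :
    (M - lam • 1).det = lam ^ 2 - M.trace * lam + M.det := by
  simp [Matrix.det_fin_two, Matrix.trace_fin_two]
  ring

lemma trace_Bmat_antitone (hd : 0 < d) : Antitone fun lam => (Bmat M d lam).trace := by
  intro lam₁ lam₂ h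
  simp only [trace_Bmat M hd.ne']
  gcongr

lemma det_Bmat_monotoneOn (hd : 0 < d) :
    MonotoneOn (fun lam => (Bmat M d lam).det) (Set.Ici (M.trace / 2)) := by
  intro lam₁ h₁ lam₂ h₂ h
  simp only [Set.mem_Ici] at h₁ h₂
  simp only [det_Bmat, det_sub_smul_one_fin_two]
  gcongr ?_ / d
  nlinarith [mul_nonneg (sub_nonneg.2 h) (show 0 ≤ lam₁ + lam₂ - M.trace by linarith)]

end

theorem stmt14_general (J : ℝ → Matrix (Fin 2) (Fin 2) ℝ)
    (d : ℝ) (hd : 0 < d)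
    (htr : ∀ y ∈ Set.Icc (0 : ℝ) 1, (J y).trace < 0)
    (lam₁ lam₂ : ℝ) (h₁ : 0 ≤ lam₁) (h₁₂ : lam₁ ≤ lam₂) :
    TuringRegion J d lam₂ ⊆ TuringRegion J d lam₁ := by
  rintro x ⟨hx, htr₂, hdisc₂⟩
  have hlam₁ : lam₁ ∈ Set.Ici ((J x).trace / 2) := by
    simp only [Set.mem_Ici]; linarith [htr x hx]
  have htr_le := trace_Bmat_antitone (J x) hd h₁₂
  have hdet_le := det_Bmat_monotoneOn (J x) hd hlam₁ (le_trans hlam₁ h₁₂) h₁₂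
  have hsq := pow_le_pow_left₀ htr₂.le htr_le 2
  exact ⟨hx, htr₂.trans_le htr_le, by simp only at hsq hdet_le; linarith⟩

theorem stmt14 (J : ℝ → Matrix (Fin 2) (Fin 2) ℝ) (hJ : Continuous J)
    (d : ℝ) (hd : 0 < d) (hd1 : d < 1)
    (htr : ∀ y ∈ Set.Icc (0 : ℝ) 1, (J y).trace < 0)
    (hdet : ∀ y ∈ Set.Icc (0 : ℝ) 1, 0 < (J y).det)
    (lam₁ lam₂ : ℝ) (h₁ : 0 ≤ lam₁) (h₁₂ : lam₁ ≤ lam₂) :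
    TuringRegion J d lam₂ ⊆ TuringRegion J d lam₁ :=
  stmt14_general J d hd htr lam₁ lam₂ h₁ h₁₂
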